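/- arXiv:2410.22232 — 2 statements merged into one kernel-verified Lean document; each statement's English description precedes it below -/
import Mathlib

section
/- Let n ≥ 1, u = (u_0,u_1,...,u_{n-1}) be a weakly increasing vector of positive integers, and u' = (u_0, u_0, u_1, ..., u_{n-2}). Then a sequence a ∈ ℕ^n is a prime u-parking function if and only if it is a u'-parking function. -/
/-- `#{j : a j < t}`. -/
def countLt {n : ℕ} (a : Fin n → ℕ) (t : ℕ) : ℕ :=
  (Finset.univ.filter fun j => a j < t).card

/-- `a` is a `u`-parking function: `#{j : a j < u i} ≥ i + 1` for all `i = 0, …, n-1`. -/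
def IsUPF {n : ℕ} (u : Fin n → ℕ) (a : Fin n → ℕ) : Prop :=
  ∀ i : Fin n, (i : ℕ) + 1 ≤ countLt a (u i)

/-- `a` is a prime `u`-parking function. -/
def IsPrimeUPF {n : ℕ} (u : Fin n → ℕ) (a : Fin n → ℕ) : Prop :=
  IsUPF u a ∧ ∀ i : Fin n, (i : ℕ) + 1 < n → (i : ℕ) + 1 < countLt a (u i)

lemma countLt_mono {n : ℕ} (a : Fin n → ℕ) {s t : ℕ} (h : s ≤ t) :
    countLt a s ≤ countLt a t := by
  apply Finset.card_le_card
  intro j hj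
  simp only [Finset.mem_filter] at *
  exact ⟨hj.1, lt_of_lt_of_le hj.2 h⟩

/-- For `n ≥ 1` and weakly increasing `u` of positive integers, `a` is a prime
`u`-parking function iff it is a `u'`-parking function, where
`u' = (u_0, u_0, u_1, …, u_{n-2})`, i.e. `u' i = u (i - 1)` (with truncated subtraction). -/
theorem stmt2 (n : ℕ) (hn : 1 ≤ n) (u : Fin n → ℕ) (hu : Monotone u) (hpos : ∀ i, 0 < u i)
    (a : Fin n → ℕ) :
    IsPrimeUPF u a ↔
      IsUPF (fun i : Fin n => u ⟨(i : ℕ) - 1, lt_of_le_of_lt (Nat.sub_le _ _) i.isLt⟩) a := by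
  constructor
  · rintro ⟨h1, h2⟩ i
    rcases Nat.eq_zero_or_pos (i : ℕ) with h0 | h0
    · simp only [h0]
      have := h1 ⟨0, hn⟩
      simpa using this
    · have hlt : (i : ℕ) - 1 + 1 < n := by omega
      have := h2 ⟨(i : ℕ) - 1, lt_of_le_of_lt (Nat.sub_le _ _) i.isLt⟩ hlt
      simp only at this ⊢
      omega
  · intro h
    constructor
    · intro i
      have := h i
      simp only at this
      calc (i : ℕ) + 1 ≤ _ := this
        _ ≤ countLt a (u i) := countLt_mono a (hu (by simp [Fin.le_def, Nat.sub_le]))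
    · intro i hi
      have := h ⟨(i : ℕ) + 1, hi⟩
      simp only at this
      have he : (⟨(i : ℕ) + 1 - 1, lt_of_le_of_lt (Nat.sub_le _ _) (Fin.mk (n := n) ((i:ℕ)+1) hi).isLt⟩ : Fin n) = i := by
        ext; simp
      rw [he] at this
      omega
end

section
/- Let p, q ≥ 1 and let (a, b) ∈ ℕ^p × ℕ^q with order statistics (a_{(0)},...,a_{(p-1)}) and (b_{(0)},...,b_{(q-1)}). Then (a,b) is a (p,q)-parking function if and only if: (i) #{j : a_j < i+1} ≥ b_{(i)} for all i = 0,...,q-1, and (ii) #{j : b_j < i+1} ≥ a_{(i)} for all i = 0,...,p-1. -/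
/-- `#{j : a j ≤ t}`. -/
def countLe {n : ℕ} (a : Fin n → ℕ) (t : ℕ) : ℕ :=
  (Finset.univ.filter fun j => a j ≤ t).card

/-- The `i`-th order statistic (`0`-indexed) of `a`. -/
noncomputable def orderStat {n : ℕ} (a : Fin n → ℕ) (i : Fin n) : ℕ :=
  sInf {t : ℕ | (i : ℕ) + 1 ≤ countLe a t}

/-- The lattice points visited by a monotone lattice path starting at `st`,
where `true` is a north step and `false` is an east step. -/
def stepPoints : ℕ × ℕ → List Bool → List (ℕ × ℕ)
  | st, [] => [st]
  | st, step :: rest =>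
      st :: stepPoints (if step then (st.1, st.2 + 1) else (st.1 + 1, st.2)) rest

/-- The `x`-coordinates of the north steps of a path starting at `x`-coordinate `x`. -/
def northXs : ℕ → List Bool → List ℕ
  | _, [] => []
  | x, true :: rest => x :: northXs x rest
  | x, false :: rest => northXs (x + 1) rest

/-- The `y`-coordinates of the east steps of a path starting at `y`-coordinate `y`. -/
def eastYs : ℕ → List Bool → List ℕ
  | _, [] => []
  | y, true :: rest => eastYs (y + 1) rest
  | y, false :: rest => y :: eastYs y rest

/-- `s` is a monotone lattice path from `(0,0)` to `(p,q)`. -/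
def IsPathL (p q : ℕ) (s : List Bool) : Prop :=
  s.count false = p ∧ s.count true = q

/-- `s` lies weakly above `s'` (both paths from `(0,0)` to `(p,q)`): every visited point
of `s'` has a visited point of `s` weakly above it in the same column. -/
def WeaklyAbove (s s' : List Bool) : Prop :=
  ∀ pt ∈ stepPoints (0, 0) s', ∃ pt' ∈ stepPoints (0, 0) s, pt'.1 = pt.1 ∧ pt.2 ≤ pt'.2

/-- `(a, b)` is a `(p,q)`-parking function: the path `L_b`, whose north steps have
`x`-coordinates given by the order statistics of `b`, lies weakly above the path
`L_a^⊥`, whose east steps have `y`-coordinates given by the order statistics of `a`. -/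
def IsPQParkingFunction {p q : ℕ} (a : Fin p → ℕ) (b : Fin q → ℕ) : Prop :=
  ∃ sa sb : List Bool, IsPathL p q sa ∧ IsPathL p q sb ∧
    eastYs 0 sa = List.ofFn (fun i : Fin p => orderStat a i) ∧
    northXs 0 sb = List.ofFn (fun j : Fin q => orderStat b j) ∧
    WeaklyAbove sb sa

/-!
Write `A(t) = #{j : a_j ≤ t}` and `B(t) = #{j : b_j ≤ t}`. The points of `L_b` in column `u` are
the heights from `#{j : b_j < u}` to `B(u)`, and those of `L_a^⊥` in row `v` are the columns from
`#{j : a_j < v}` to `A(v)`. Hence `L_b` lies weakly above `L_a^⊥` iff `v ≤ B(#{j : a_j < v})` for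
all `v ≤ q`, which by the Galois connection `a_(i) ≤ t ↔ i + 1 ≤ A(t)` is condition (i). The paths
exist iff the order statistics are bounded by `q` and `p`, and then (i) and (ii) are equivalent.
-/

section OrderStatistics

variable {n : ℕ}

lemma countLe_mono (a : Fin n → ℕ) : Monotone (countLe a) := fun _ _ hst =>
  Finset.card_le_card (Finset.monotone_filter_right _ fun _ _ h => h.trans hst)

lemma countLe_le (a : Fin n → ℕ) (t : ℕ) : countLe a t ≤ n :=
  (Finset.card_filter_le _ _).trans_eq (Finset.card_fin n)

lemma countLt_le (a : Fin n → ℕ) (t : ℕ) : countLt a t ≤ n :=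
  (Finset.card_filter_le _ _).trans_eq (Finset.card_fin n)

lemma countLt_succ (a : Fin n → ℕ) (t : ℕ) : countLt a (t + 1) = countLe a t := by
  simp only [countLt, countLe, Nat.lt_succ_iff]

lemma orderStat_le_iff (a : Fin n → ℕ) (i : Fin n) (t : ℕ) :
    orderStat a i ≤ t ↔ (i : ℕ) + 1 ≤ countLe a t := by
  have hne : {t : ℕ | (i : ℕ) + 1 ≤ countLe a t}.Nonempty := by
    refine ⟨Finset.univ.sup a, ?_⟩
    have hall : countLe a (Finset.univ.sup a) = n := by
      simp [countLe, Finset.filter_true_of_mem fun j _ => Finset.le_sup (Finset.mem_univ j)]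
    show (i : ℕ) + 1 ≤ _
    rw [hall]
    exact i.isLt
  exact ⟨fun h => (Nat.sInf_mem hne).trans (countLe_mono a h), fun h => Nat.sInf_le h⟩

lemma orderStat_mono (a : Fin n → ℕ) : Monotone (orderStat a) := fun i j hij =>
  (orderStat_le_iff a i _).2 <| (Nat.succ_le_succ hij).trans ((orderStat_le_iff a j _).1 le_rfl)

lemma countLe_orderStat (a : Fin n → ℕ) (t : ℕ) : countLe (orderStat a) t = countLe a t := by
  have hfilter : (Finset.univ.filter fun i => orderStat a i ≤ t) =
      Finset.univ.filter fun i : Fin n => (i : ℕ) < countLe a t := by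
    ext i
    simp only [Finset.mem_filter, Finset.mem_univ, true_and, orderStat_le_iff]
    omega
  rw [countLe, hfilter, Fin.card_filter_val_lt, min_eq_right (countLe_le a t)]

lemma countLt_orderStat (a : Fin n → ℕ) (t : ℕ) : countLt (orderStat a) t = countLt a t := by
  cases t with
  | zero => simp [countLt]
  | succ t => rw [countLt_succ, countLt_succ, countLe_orderStat]

/-- Apply the hypothesis on `b` at `m = #{j : b_j ≤ i}`, where `b_(m) > i`. -/
lemma orderStat_le_countLt_of_forall {p q : ℕ} {a : Fin p → ℕ} {b : Fin q → ℕ}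
    (ha : ∀ i, orderStat a i ≤ q) (hb : ∀ j : Fin q, orderStat b j ≤ countLt a (j + 1))
    (i : Fin p) : orderStat a i ≤ countLt b (i + 1) := by
  rw [countLt_succ, orderStat_le_iff]
  rcases (countLe_le b i).lt_or_eq with hm | hm
  · have hgt : ¬ orderStat b ⟨_, hm⟩ ≤ i := by simp [orderStat_le_iff]
    have hle : orderStat b ⟨_, hm⟩ ≤ countLe a (countLe b i) := by
      simpa [countLt_succ] using hb ⟨_, hm⟩
    omega
  · rw [hm, ← orderStat_le_iff]
    exact ha i

end OrderStatistics

lemma List.countP_ofFn {α : Type*} {n : ℕ} (f : Fin n → α) (P : α → Prop) [DecidablePred P] :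
    (List.ofFn f).countP (P ·) = (Finset.univ.filter (P ∘ f)).card := by
  rw [← Multiset.coe_countP, ← Fin.univ_val_map, Multiset.countP_map]
  rfl

lemma countP_ofFn_orderStat_le {n : ℕ} (a : Fin n → ℕ) (t : ℕ) :
    (List.ofFn (orderStat a)).countP (· ≤ t) = countLe a t :=
  (List.countP_ofFn _ (· ≤ t)).trans (countLe_orderStat a t)

lemma countP_ofFn_orderStat_lt {n : ℕ} (a : Fin n → ℕ) (t : ℕ) :
    (List.ofFn (orderStat a)).countP (· < t) = countLt a t :=
  (List.countP_ofFn _ (· < t)).trans (countLt_orderStat a t)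

lemma countP_lt_le_countP_le (l : List ℕ) (t : ℕ) : l.countP (· < t) ≤ l.countP (· ≤ t) :=
  List.countP_mono_left fun _ _ h => by simp only [decide_eq_true_eq] at h ⊢; omega

lemma countP_le_mono (l : List ℕ) {s t : ℕ} (hst : s ≤ t) : l.countP (· ≤ s) ≤ l.countP (· ≤ t) :=
  List.countP_mono_left fun _ _ h => by simp only [decide_eq_true_eq] at h ⊢; omega

section LatticePaths

lemma count_map_not (s : List Bool) (b : Bool) : (s.map not).count b = s.count (!b) := by
  simp only [List.count_eq_countP, List.countP_map, Function.comp_def]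
  congr 1
  funext x
  cases x <;> cases b <;> rfl

lemma northXs_map_not (s : List Bool) (y : ℕ) : northXs y (s.map not) = eastYs y s := by
  induction s generalizing y with
  | nil => rfl
  | cons step s ih => cases step <;> simp [northXs, eastYs, ih]

lemma stepPoints_map_not (s : List Bool) (x y : ℕ) :
    stepPoints (y, x) (s.map not) = (stepPoints (x, y) s).map Prod.swap := by
  induction s generalizing x y with
  | nil => rfl
  | cons step s ih => cases step <;> simp [stepPoints, ih]

lemma le_of_mem_northXs {s : List Bool} {x e : ℕ} (he : e ∈ northXs x s) : x ≤ e := by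
  induction s generalizing x with
  | nil => simp [northXs] at he
  | cons step s ih =>
    cases step
    · exact (Nat.le_succ x).trans (ih he)
    · simp only [northXs, List.mem_cons] at he
      exact he.elim (·.ge) ih

lemma le_add_count_false_of_mem_northXs {s : List Bool} {x e : ℕ} (he : e ∈ northXs x s) :
    e ≤ x + s.count false := by
  induction s generalizing x with
  | nil => simp [northXs] at he
  | cons step s ih =>
    cases step
    · have := ih he
      simp only [List.count_cons_self]
      omega
    · simp only [northXs, List.mem_cons, List.count_cons_of_ne (by decide : true ≠ false)] at he ⊢
      exact he.elim (fun h => h ▸ Nat.le_add_right _ _) ih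

lemma le_add_count_true_of_mem_eastYs {s : List Bool} {y e : ℕ} (he : e ∈ eastYs y s) :
    e ≤ y + s.count true := by
  simpa [count_map_not] using
    le_add_count_false_of_mem_northXs (s := s.map not) (northXs_map_not s y ▸ he)

lemma mem_stepPoints_iff (s : List Bool) (x y u v : ℕ) :
    (u, v) ∈ stepPoints (x, y) s ↔ x ≤ u ∧ u ≤ x + s.count false ∧
      y + (northXs x s).countP (· < u) ≤ v ∧ v ≤ y + (northXs x s).countP (· ≤ u) := by
  have hle_zero {x : ℕ} (s : List Bool) (hu : u < x) : (northXs x s).countP (· ≤ u) = 0 :=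
    List.countP_eq_zero.2 fun e he => by
      have := le_of_mem_northXs he; simp only [decide_eq_true_eq]; omega
  have hlt_zero {x : ℕ} (s : List Bool) (hu : u ≤ x) : (northXs x s).countP (· < u) = 0 :=
    List.countP_eq_zero.2 fun e he => by
      have := le_of_mem_northXs he; simp only [decide_eq_true_eq]; omega
  induction s generalizing x y with
  | nil =>
    simp only [stepPoints, northXs, List.mem_singleton, Prod.mk.injEq, List.count_nil,
      List.countP_nil]
    omega
  | cons step s ih =>
    cases step
    · simp only [stepPoints, northXs, List.mem_cons, Prod.mk.injEq, ih, Bool.false_eq_true,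
        if_false, List.count_cons_self]
      have := countP_lt_le_countP_le (northXs (x + 1) s) u
      rcases Nat.lt_or_ge x u with hu | hu
      · constructor <;> intro h <;> omega
      · have := hle_zero s (by omega : u < x + 1)
        constructor <;> intro h <;> omega
    · simp only [stepPoints, northXs, List.mem_cons, Prod.mk.injEq, ih, if_true,
        List.count_cons_of_ne (by decide : true ≠ false), List.countP_cons]
      rcases lt_trichotomy x u with hu | rfl | hu
      · simp only [hu, hu.le, decide_true, if_true, true_and]
        constructor <;> intro h <;> omega
      · simp only [hlt_zero s le_rfl, lt_irrefl, le_refl, decide_true, decide_false, if_true,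
          Bool.false_eq_true, if_false, true_and]
        constructor <;> intro h <;> omega
      · constructor <;> intro h <;> omega

lemma mem_stepPoints_zero_iff (s : List Bool) (u v : ℕ) :
    (u, v) ∈ stepPoints (0, 0) s ↔ u ≤ s.count false ∧
      (northXs 0 s).countP (· < u) ≤ v ∧ v ≤ (northXs 0 s).countP (· ≤ u) := by
  simp [mem_stepPoints_iff]

lemma mem_stepPoints_zero_iff_eastYs (s : List Bool) (u v : ℕ) :
    (u, v) ∈ stepPoints (0, 0) s ↔ v ≤ s.count true ∧
      (eastYs 0 s).countP (· < v) ≤ u ∧ u ≤ (eastYs 0 s).countP (· ≤ v) := by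
  have hswap : (u, v) ∈ stepPoints (0, 0) s ↔ (v, u) ∈ stepPoints (0, 0) (s.map not) := by
    simp [stepPoints_map_not]
  rw [hswap, mem_stepPoints_zero_iff, northXs_map_not, count_map_not, Bool.not_false]

/-- Only the lowest point `(#{east steps below v}, v)` of `s'` in each row `v` matters, and it must
lie below the top point of `s` in its column. -/
lemma weaklyAbove_iff {s s' : List Bool} (hcount : s.count false = s'.count false) :
    WeaklyAbove s s' ↔ ∀ v ≤ s'.count true,
      v ≤ (northXs 0 s).countP (· ≤ (eastYs 0 s').countP (· < v)) := by
  constructor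
  · intro hw v hv
    obtain ⟨⟨u', v'⟩, hpt, rfl, hvv'⟩ := hw _ <|
      (mem_stepPoints_zero_iff_eastYs s' _ v).2 ⟨hv, le_rfl, countP_lt_le_countP_le _ _⟩
    exact hvv'.trans ((mem_stepPoints_zero_iff s _ _).1 hpt).2.2
  · rintro hw ⟨u, v⟩ hpt
    obtain ⟨hv, hu, -⟩ := (mem_stepPoints_zero_iff_eastYs s' u v).1 hpt
    have hup : u ≤ s.count false := hcount ▸ ((mem_stepPoints_zero_iff s' u v).1 hpt).1
    refine ⟨(u, (northXs 0 s).countP (· ≤ u)),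
      (mem_stepPoints_zero_iff s _ _).2 ⟨hup, countP_lt_le_countP_le _ _, le_rfl⟩, rfl, ?_⟩
    exact (hw v hv).trans (countP_le_mono _ hu)

def pathOfNorthXs (p : ℕ) : ℕ → List ℕ → List Bool
  | x, [] => List.replicate (p - x) false
  | x, e :: l => List.replicate (e - x) false ++ true :: pathOfNorthXs p e l

lemma northXs_replicate_false_append (s : List Bool) (k x : ℕ) :
    northXs x (List.replicate k false ++ s) = northXs (x + k) s := by
  induction k generalizing x with
  | zero => rfl
  | succ k ih => rw [List.replicate_succ, List.cons_append, northXs, ih, Nat.add_right_comm]; rfl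

lemma northXs_pathOfNorthXs (p : ℕ) {x : ℕ} {l : List ℕ} (hl : (x :: l).Pairwise (· ≤ ·)) :
    northXs x (pathOfNorthXs p x l) = l := by
  induction l generalizing x with
  | nil =>
    rw [pathOfNorthXs, ← List.append_nil (List.replicate _ _), northXs_replicate_false_append]
    rfl
  | cons e l ih =>
    obtain ⟨hx, hl⟩ := List.pairwise_cons.1 hl
    rw [pathOfNorthXs, northXs_replicate_false_append, Nat.add_sub_cancel' (hx e (by simp)),
      northXs, ih hl]

lemma count_true_pathOfNorthXs (p x : ℕ) (l : List ℕ) :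
    (pathOfNorthXs p x l).count true = l.length := by
  induction l generalizing x with
  | nil => simp [pathOfNorthXs, List.count_replicate]
  | cons e l ih => simp [pathOfNorthXs, List.count_replicate, ih]

lemma count_false_pathOfNorthXs {p x : ℕ} {l : List ℕ} (hl : (x :: l).Pairwise (· ≤ ·))
    (hp : ∀ e ∈ x :: l, e ≤ p) : (pathOfNorthXs p x l).count false = p - x := by
  induction l generalizing x with
  | nil => simp [pathOfNorthXs]
  | cons e l ih =>
    obtain ⟨hx, hl⟩ := List.pairwise_cons.1 hl
    have hxe := hx e (by simp)
    have hep := hp e (by simp)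
    simp only [pathOfNorthXs, List.count_append, List.count_replicate_self,
      List.count_cons_of_ne (by decide : true ≠ false)]
    rw [ih hl fun e' he' => hp e' (List.mem_cons_of_mem _ he')]
    omega

lemma exists_isPathL_northXs_eq {p q : ℕ} {l : List ℕ} (hl : l.Pairwise (· ≤ ·))
    (hlen : l.length = q) (hp : ∀ e ∈ l, e ≤ p) : ∃ s, IsPathL p q s ∧ northXs 0 s = l := by
  have hl0 : (0 :: l).Pairwise (· ≤ ·) := List.pairwise_cons.2 ⟨fun _ _ => Nat.zero_le _, hl⟩
  refine ⟨pathOfNorthXs p 0 l, ⟨?_, ?_⟩, northXs_pathOfNorthXs p hl0⟩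
  · rw [count_false_pathOfNorthXs hl0 (by simpa using hp), Nat.sub_zero]
  · rw [count_true_pathOfNorthXs, hlen]

lemma exists_isPathL_eastYs_eq {p q : ℕ} {l : List ℕ} (hl : l.Pairwise (· ≤ ·))
    (hlen : l.length = p) (hq : ∀ e ∈ l, e ≤ q) : ∃ s, IsPathL p q s ∧ eastYs 0 s = l := by
  obtain ⟨s, ⟨hq', hp'⟩, hs⟩ := exists_isPathL_northXs_eq hl hlen hq
  refine ⟨s.map not, ⟨?_, ?_⟩, ?_⟩
  · rwa [count_map_not]
  · rwa [count_map_not]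
  · simpa [← northXs_map_not, Function.comp_def] using hs

end LatticePaths

lemma isPQParkingFunction_iff {p q : ℕ} (a : Fin p → ℕ) (b : Fin q → ℕ) :
    IsPQParkingFunction a b ↔ (∀ i, orderStat a i ≤ q) ∧ (∀ j, orderStat b j ≤ p) ∧
      ∀ v ≤ q, v ≤ countLe b (countLt a v) := by
  have hweak {sa sb : List Bool} (ha : IsPathL p q sa) (hb : IsPathL p q sb)
      (hea : eastYs 0 sa = List.ofFn (orderStat a)) (hnb : northXs 0 sb = List.ofFn (orderStat b)) :
      WeaklyAbove sb sa ↔ ∀ v ≤ q, v ≤ countLe b (countLt a v) := by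
    simp only [weaklyAbove_iff (hb.1.trans ha.1.symm), ha.2, hea, hnb,
      countP_ofFn_orderStat_lt, countP_ofFn_orderStat_le]
  constructor
  · rintro ⟨sa, sb, ha, hb, hea, hnb, hab⟩
    refine ⟨fun i => ?_, fun j => ?_, (hweak ha hb hea hnb).1 hab⟩
    · have hmem : orderStat a i ∈ eastYs 0 sa := hea ▸ List.mem_ofFn.2 ⟨i, rfl⟩
      simpa [ha.2] using le_add_count_true_of_mem_eastYs hmem
    · have hmem : orderStat b j ∈ northXs 0 sb := hnb ▸ List.mem_ofFn.2 ⟨j, rfl⟩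
      simpa [hb.1] using le_add_count_false_of_mem_northXs hmem
  · rintro ⟨ha, hb, hab⟩
    obtain ⟨sa, hsa, hea⟩ := exists_isPathL_eastYs_eq (q := q)
      (List.pairwise_ofFn.2 fun _ _ hij => orderStat_mono a hij.le) List.length_ofFn
      (by simpa using ha)
    obtain ⟨sb, hsb, hnb⟩ := exists_isPathL_northXs_eq (p := p)
      (List.pairwise_ofFn.2 fun _ _ hij => orderStat_mono b hij.le) List.length_ofFn
      (by simpa using hb)
    exact ⟨sa, sb, hsa, hsb, hea, hnb, (hweak hsa hsb hea hnb).2 hab⟩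

lemma forall_le_countLe_countLt_iff {p q : ℕ} (a : Fin p → ℕ) (b : Fin q → ℕ) :
    (∀ v ≤ q, v ≤ countLe b (countLt a v)) ↔
      ∀ j : Fin q, orderStat b j ≤ countLt a (j + 1) := by
  simp only [orderStat_le_iff]
  constructor
  · exact fun h j => h _ j.isLt
  · rintro h (_ | v) hv
    · exact Nat.zero_le _
    · exact h ⟨v, hv⟩

theorem stmt7_general (p q : ℕ) (a : Fin p → ℕ) (b : Fin q → ℕ) :
    IsPQParkingFunction a b ↔
      (∀ i : Fin q, orderStat b i ≤ countLt a ((i : ℕ) + 1)) ∧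
        (∀ i : Fin p, orderStat a i ≤ countLt b ((i : ℕ) + 1)) := by
  rw [isPQParkingFunction_iff, forall_le_countLe_countLt_iff]
  constructor
  · rintro ⟨ha, -, hb⟩
    exact ⟨hb, orderStat_le_countLt_of_forall ha hb⟩
  · rintro ⟨hb, ha⟩
    exact ⟨fun i => (ha i).trans (countLt_le b _), fun j => (hb j).trans (countLt_le a _), hb⟩

/-- `(a,b)` is a `(p,q)`-parking function iff
`#{j : a j < i+1} ≥ b_(i)` for `i = 0, …, q-1` and
`#{j : b j < i+1} ≥ a_(i)` for `i = 0, …, p-1`. -/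
theorem stmt7 (p q : ℕ) (hp : 1 ≤ p) (hq : 1 ≤ q) (a : Fin p → ℕ) (b : Fin q → ℕ) :
    IsPQParkingFunction a b ↔
      (∀ i : Fin q, orderStat b i ≤ countLt a ((i : ℕ) + 1)) ∧
        (∀ i : Fin p, orderStat a i ≤ countLt b ((i : ℕ) + 1)) :=
  stmt7_general p q a b
end
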